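/- For j = 1,…,p let (M_j,d_j) be a proper geodesic metric space with an almost geodesic sequence (y_j^n) converging pointwise (via h_{y_j^n}) to a Busemann point h_j with basepoint y_j^0, let J ⊆ {1,…,p} be non-empty, and let h(x) = max_{j∈J} (h_j(x_j) − α_j) with min_{j∈J} α_j = 0 be the corresponding Busemann point of (∏_{j=1}^p M_j, d_∞) with basepoint y^0. Then the part P(h), equipped with the detour distance δ, contains an isometric copy of (ℝ^J/Sp(𝟏), ‖·‖_var): there is a map ψ from S = {β ∈ ℝ^J : min_{j∈J} β_j = 0} into P(h) such that δ(ψ(β), ψ(β')) = max_{j∈J}(β_j − β'_j) + max_{j∈J}(β'_j − β_j) for all β, β' ∈ S. -/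

import Mathlib

open Filter Topology

noncomputable section

/-- `horo b y z = d(z,y) - d(b,y)`, the function `h_y` with basepoint `b`. -/
def horo {M : Type*} [MetricSpace M] (b y z : M) : ℝ := dist z y - dist b y

/-- `HoroLim b y h` : the functions `h_{y^n}` (with basepoint `b`) converge pointwise to `h`. -/
def HoroLim {M : Type*} [MetricSpace M] (b : M) (y : ℕ → M) (h : M → ℝ) : Prop :=
  ∀ z : M, Filter.Tendsto (fun n => horo b (y n) z) Filter.atTop (nhds (h z))

/-- `h` is a horofunction of `(M,d)` with basepoint `b`. -/
def IsHorofunction {M : Type*} [MetricSpace M] (b : M) (h : M → ℝ) : Prop :=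
  (∃ y : ℕ → M, HoroLim b y h) ∧ ∀ y : M, h ≠ horo b y

/-- A metric space is geodesic: any two points are joined by a geodesic path. -/
def IsGeodesicSpace (M : Type*) [MetricSpace M] : Prop :=
  ∀ x y : M, ∃ γ : ℝ → M, γ 0 = x ∧ γ (dist x y) = y ∧
    ∀ s ∈ Set.Icc (0 : ℝ) (dist x y), ∀ t ∈ Set.Icc (0 : ℝ) (dist x y),
      dist (γ s) (γ t) = |s - t|

/-- Almost geodesic sequence. -/
def IsAlmostGeodesicSeq {M : Type*} [MetricSpace M] (y : ℕ → M) : Prop :=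
  Filter.Tendsto (fun n => dist (y n) (y 0)) Filter.atTop Filter.atTop ∧
  ∀ ε > (0 : ℝ), ∃ N : ℕ, ∀ m k : ℕ, N ≤ k → k ≤ m →
    dist (y m) (y k) + dist (y k) (y 0) - dist (y m) (y 0) < ε

/-- A Busemann point: a horofunction that is the limit of an almost geodesic sequence. -/
def IsBusemannPoint {M : Type*} [MetricSpace M] (b : M) (h : M → ℝ) : Prop :=
  IsHorofunction b h ∧ ∃ y : ℕ → M, IsAlmostGeodesicSeq y ∧ HoroLim b y h

/-- Detour cost `H(h₁,h₂)`, with values in `EReal` (so it may be `⊤ = ∞`). -/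
def detourCost {M : Type*} [MetricSpace M] (b : M) (h₁ h₂ : M → ℝ) : EReal :=
  ⨅ z : {z : ℕ → M // HoroLim b z h₁},
    Filter.liminf (fun n => ((dist b (z.1 n) + h₂ (z.1 n) : ℝ) : EReal)) Filter.atTop

/-- Detour distance `δ(h₁,h₂) = H(h₁,h₂) + H(h₂,h₁)`. -/
def detourDist {M : Type*} [MetricSpace M] (b : M) (h₁ h₂ : M → ℝ) : EReal :=
  detourCost b h₁ h₂ + detourCost b h₂ h₁

/-!
Each almost geodesic sequence `y_j` in the geodesic space `M_j` can be upgraded to an almost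
geodesic ray `W_j : ℝ → M_j`, parametrised by the distance to the basepoint, by following geodesics
between the terms of a subsequence along which `y_j` is better and better almost geodesic; then
`d(x, W_j t) - t → h_j x`. In the sup-product, `t ↦ (W_j (t - γ_j))_{j ∈ J}` is again such a ray,
with Busemann function `h_γ = max_{j ∈ J} (h_j - γ_j)`. Along it `h_{γ'} + t → max_J (γ - γ')`,
and because horofunctions are `1`-Lipschitz this limit is exactly the detour cost `H(h_γ, h_{γ'})`.
So `β ↦ h_β` is the required isometry.
-/

/-- `IsAlmostGeodesicSeq` measures distances from the `0`-th term, so the sequence is started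
at the basepoint `b` rather than at `W 0`. -/
def raySeq {M : Type*} (b : M) (W : ℝ → M) (n : ℕ) : M := if n = 0 then b else W n

lemma raySeq_eventually_eq {M : Type*} (b : M) (W : ℝ → M) :
    ∀ᶠ n in atTop, raySeq b W n = W n :=
  eventually_atTop.2 ⟨1, fun n hn => if_neg (by omega)⟩

section Rays

variable {M : Type*} [MetricSpace M]

def IsAlmostGeodesicRay (W : ℝ → M) : Prop :=
  ∀ ε > 0, ∀ᶠ s in atTop, ∀ t, s ≤ t → dist (W s) (W t) ≤ t - s + ε

def IsBusemannFunction (W : ℝ → M) (h : M → ℝ) : Prop :=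
  ∀ x, Tendsto (fun t => dist x (W t) - t) atTop (𝓝 (h x))

variable {b : M} {W : ℝ → M} {h h₁ h₂ : M → ℝ}

lemma IsBusemannFunction.le_add_dist (hWh : IsBusemannFunction W h) (x x' : M) :
    h x ≤ h x' + dist x x' :=
  le_of_tendsto_of_tendsto' (hWh x) ((hWh x').add_const (dist x x')) fun t => by
    linarith [dist_triangle x x' (W t)]

lemma IsBusemannFunction.tendsto_apply_add (hW : IsAlmostGeodesicRay W)
    (hWh : IsBusemannFunction W h) : Tendsto (fun t => h (W t) + t) atTop (𝓝 0) := by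
  refine tendsto_order.2 ⟨fun δ hδ => ?_, fun δ hδ => ?_⟩
  · filter_upwards [(hWh (W 0)).eventually (gt_mem_nhds (by linarith : h (W 0) < h (W 0) - δ))]
      with t ht
    linarith [hWh.le_add_dist (W 0) (W t)]
  · filter_upwards [hW (δ / 2) (half_pos hδ)] with s hs
    have : h (W s) ≤ -s + δ / 2 :=
      le_of_tendsto (hWh (W s)) (eventually_atTop.2 ⟨s, fun t hst => by linarith [hs t hst]⟩)
    linarith

lemma IsBusemannFunction.horoLim_raySeq (hWh : IsBusemannFunction W h) (hb : h b = 0) :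
    HoroLim b (raySeq b W) h := by
  intro x
  have := ((hWh x).sub (hWh b)).comp tendsto_natCast_atTop_atTop
  rw [hb, sub_zero] at this
  refine this.congr' ?_
  filter_upwards [raySeq_eventually_eq b W] with n hn
  simp only [Function.comp_apply, horo, hn]
  ring

lemma IsAlmostGeodesicRay.isAlmostGeodesicSeq_raySeq (hW : IsAlmostGeodesicRay W)
    (hWh : IsBusemannFunction W h) (hb : h b = 0) : IsAlmostGeodesicSeq (raySeq b W) := by
  have hbW : Tendsto (fun n : ℕ => dist b (W n) - n) atTop (𝓝 0) :=
    hb ▸ (hWh b).comp tendsto_natCast_atTop_atTop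
  have h0 : raySeq b W 0 = b := if_pos rfl
  refine ⟨?_, fun δ hδ => ?_⟩
  · refine (hbW.add_atTop tendsto_natCast_atTop_atTop).congr' ?_
    filter_upwards [raySeq_eventually_eq b W] with n hn
    rw [hn, h0, dist_comm]
    ring
  · obtain ⟨N, hN⟩ := eventually_atTop.1 <| (raySeq_eventually_eq b W).and <|
      (tendsto_natCast_atTop_atTop.eventually (hW (δ / 3) (by positivity))).and <|
        (hbW.eventually (gt_mem_nhds (by positivity : (0 : ℝ) < δ / 3))).and
          (hbW.eventually (lt_mem_nhds (by linarith : -(δ / 3) < 0)))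
    refine ⟨N, fun m k hk hkm => ?_⟩
    obtain ⟨hk₁, hk₂, hk₃, -⟩ := hN k hk
    obtain ⟨hm₁, -, -, hm₄⟩ := hN m (hk.trans hkm)
    have := hk₂ m (Nat.cast_le.2 hkm)
    rw [hk₁, hm₁, h0, dist_comm (W m) (W k), dist_comm (W k) b, dist_comm (W m) b]
    linarith

theorem IsAlmostGeodesicRay.isBusemannPoint (hW : IsAlmostGeodesicRay W)
    (hWh : IsBusemannFunction W h) (hb : h b = 0) : IsBusemannPoint b h := by
  refine ⟨⟨⟨_, hWh.horoLim_raySeq hb⟩, fun v hv => ?_⟩, _,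
    hW.isAlmostGeodesicSeq_raySeq hWh hb, hWh.horoLim_raySeq hb⟩
  have hbot : Tendsto (fun t => h (W t) + t + -t) atTop atBot :=
    (hWh.tendsto_apply_add hW).add_atBot tendsto_neg_atTop_atBot
  obtain ⟨t, ht⟩ := (hbot.eventually_lt_atBot (-dist b v)).exists
  have : h (W t) = dist (W t) v - dist b v := by rw [hv, horo]
  linarith [dist_nonneg (x := W t) (y := v)]

lemma le_detourCost (hlip : ∀ x x', h₂ x ≤ h₂ x' + dist x x') (x : M) :
    ((h₂ x - h₁ x : ℝ) : EReal) ≤ detourCost b h₁ h₂ := by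
  rw [detourCost]
  refine le_iInf ?_
  rintro ⟨v, hv⟩
  have hlim : Tendsto (fun n => ((h₂ x - horo b (v n) x : ℝ) : EReal)) atTop
      (𝓝 ((h₂ x - h₁ x : ℝ) : EReal)) :=
    EReal.tendsto_coe.2 (tendsto_const_nhds.sub (hv x))
  rw [← hlim.liminf_eq]
  refine liminf_le_liminf (Eventually.of_forall fun n => EReal.coe_le_coe_iff.2 ?_)
  have := hlip x (v n)
  simp only [horo]
  linarith

lemma detourCost_le {z : ℕ → M} (hz : HoroLim b z h₁) {c : ℝ}
    (hc : Tendsto (fun n => dist b (z n) + h₂ (z n)) atTop (𝓝 c)) :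
    detourCost b h₁ h₂ ≤ c := by
  rw [detourCost]
  refine (iInf_le _ ⟨z, hz⟩).trans (le_of_eq ?_)
  exact (EReal.tendsto_coe.2 hc).liminf_eq

theorem IsAlmostGeodesicRay.detourCost_eq (hW : IsAlmostGeodesicRay W)
    (hWh : IsBusemannFunction W h₁) (hb : h₁ b = 0) (hlip : ∀ x x', h₂ x ≤ h₂ x' + dist x x')
    {c : ℝ} (hc : Tendsto (fun t => h₂ (W t) + t) atTop (𝓝 c)) :
    detourCost b h₁ h₂ = c := by
  refine le_antisymm (detourCost_le (hWh.horoLim_raySeq hb) ?_) ?_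
  · have := ((hb ▸ hWh b).add hc).comp tendsto_natCast_atTop_atTop
    rw [zero_add] at this
    refine this.congr' ?_
    filter_upwards [raySeq_eventually_eq b W] with n hn
    simp only [Function.comp_apply, hn]
    ring
  · have := hc.sub (hWh.tendsto_apply_add hW)
    rw [sub_zero] at this
    refine le_of_tendsto' (EReal.tendsto_coe.2 (this.congr fun t => ?_)) fun t =>
      le_detourCost hlip (W t)
    ring

end Rays

namespace IsGeodesicSpace

variable {M : Type*} [MetricSpace M] (hM : IsGeodesicSpace M)

def path (x y : M) : ℝ → M := (hM x y).choose

variable {hM} {x y : M} {r : ℝ}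

lemma dist_path_left (hr : r ∈ Set.Icc 0 (dist x y)) : dist x (hM.path x y r) = r := by
  obtain ⟨h0, -, hiso⟩ := (hM x y).choose_spec
  have := hiso 0 ⟨le_rfl, dist_nonneg⟩ r hr
  rwa [h0, zero_sub, abs_neg, abs_of_nonneg hr.1] at this

lemma dist_path_right (hr : r ∈ Set.Icc 0 (dist x y)) :
    dist (hM.path x y r) y = dist x y - r := by
  obtain ⟨-, h1, hiso⟩ := (hM x y).choose_spec
  have := hiso r hr (dist x y) ⟨dist_nonneg, le_rfl⟩
  rwa [h1, abs_sub_comm, abs_of_nonneg (sub_nonneg.2 hr.2)] at this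

lemma dist_path_path {s t : ℝ} (hs : s ∈ Set.Icc 0 (dist x y)) (ht : t ∈ Set.Icc 0 (dist x y)) :
    dist (hM.path x y s) (hM.path x y t) = |s - t| :=
  (hM x y).choose_spec.2.2 s hs t ht

end IsGeodesicSpace

section Interpolation

variable {M : Type*} [MetricSpace M] (b : M) (p : ℕ → M)

def stage (t : ℝ) : ℕ := sInf {i | t < dist b (p (i + 1))}

def interpolate (hM : IsGeodesicSpace M) (t : ℝ) : M :=
  hM.path (p (stage b p t)) (p (stage b p t + 1)) (t - dist b (p (stage b p t)))

variable {b p} {s t : ℝ}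

lemma dist_le_of_lt_stage {i : ℕ} (hi : i < stage b p t) : dist b (p (i + 1)) ≤ t :=
  not_lt.1 (Nat.notMem_of_lt_sInf hi)

lemma dist_stage_le (ht : dist b (p 0) ≤ t) : dist b (p (stage b p t)) ≤ t := by
  rcases Nat.eq_zero_or_eq_succ_pred (stage b p t) with h | h
  · rwa [h]
  · rw [h]; exact dist_le_of_lt_stage (h ▸ Nat.lt_succ_self _)

variable (hd : Tendsto (fun i => dist b (p i)) atTop atTop)
include hd

lemma lt_dist_stage_succ (t : ℝ) : t < dist b (p (stage b p t + 1)) :=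
  Nat.sInf_mem (((tendsto_add_atTop_iff_nat 1).2 hd).eventually_gt_atTop t).exists

lemma stage_mono (hst : s ≤ t) : stage b p s ≤ stage b p t :=
  Nat.sInf_le (hst.trans_lt (lt_dist_stage_succ hd t))

lemma tendsto_stage : Tendsto (stage b p) atTop atTop := by
  refine tendsto_atTop.2 fun I => ?_
  filter_upwards [(Finset.range I).eventually_all.2 fun i _ =>
    eventually_ge_atTop (dist b (p (i + 1)))] with t ht
  by_contra! hlt
  exact (lt_dist_stage_succ hd t).not_ge (ht _ (Finset.mem_range.2 hlt))

variable {hM : IsGeodesicSpace M} {ε : ℕ → ℝ}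

lemma mem_Icc_of_stage (ht : dist b (p 0) ≤ t) :
    t - dist b (p (stage b p t)) ∈ Set.Icc 0 (dist (p (stage b p t)) (p (stage b p t + 1))) := by
  have := dist_triangle b (p (stage b p t)) (p (stage b p t + 1))
  constructor <;> linarith [dist_stage_le ht, lt_dist_stage_succ hd t]

lemma dist_interpolate_left (ht : dist b (p 0) ≤ t) :
    dist (p (stage b p t)) (interpolate b p hM t) = t - dist b (p (stage b p t)) :=
  IsGeodesicSpace.dist_path_left (mem_Icc_of_stage hd ht)

variable (hp : ∀ i j l, i ≤ j → j ≤ l → dist (p j) (p l) + dist b (p j) - dist b (p l) ≤ ε i)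
include hp

lemma dist_interpolate_right (ht : dist b (p 0) ≤ t) :
    dist (interpolate b p hM t) (p (stage b p t + 1)) ≤
      dist b (p (stage b p t + 1)) - t + ε (stage b p t) := by
  have := hp _ _ (stage b p t + 1) le_rfl (Nat.le_succ _)
  rw [interpolate, IsGeodesicSpace.dist_path_right (mem_Icc_of_stage hd ht)]
  linarith

lemma dist_interpolate_interpolate (hs : dist b (p 0) ≤ s) (hst : s ≤ t) :
    dist (interpolate b p hM s) (interpolate b p hM t) ≤ t - s + 2 * ε (stage b p s) := by
  set i := stage b p s
  set i' := stage b p t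
  have hε : 0 ≤ ε i := by simpa using hp i i i le_rfl le_rfl
  rcases (stage_mono hd hst).eq_or_lt with hii' | hii'
  · have hs' := mem_Icc_of_stage hd hs
    have ht' := mem_Icc_of_stage hd (hs.trans hst)
    rw [← hii'] at ht'
    rw [interpolate, interpolate, ← hii', IsGeodesicSpace.dist_path_path hs' ht',
      abs_sub_comm, abs_of_nonneg (by linarith)]
    linarith
  · calc dist (interpolate b p hM s) (interpolate b p hM t)
        ≤ dist (interpolate b p hM s) (p (i + 1)) + dist (p (i + 1)) (p i') +
            dist (p i') (interpolate b p hM t) := dist_triangle4 _ _ _ _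
      _ ≤ (dist b (p (i + 1)) - s + ε i) + (dist b (p i') - dist b (p (i + 1)) + ε i) +
            (t - dist b (p i')) := by
        gcongr
        · exact dist_interpolate_right hd hp hs
        · linarith [hp i (i + 1) i' (Nat.le_succ i) hii']
        · exact (dist_interpolate_left hd (hs.trans hst)).le
      _ = t - s + 2 * ε i := by ring

end Interpolation

section RaysFromSequences

variable {M : Type*} [MetricSpace M] {b : M} {p : ℕ → M} {ε : ℕ → ℝ} {h : M → ℝ}

lemma HoroLim.apply_base_eq_zero (hlim : HoroLim b p h) : h b = 0 :=
  tendsto_nhds_unique (hlim b) (by simp [horo])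

lemma HoroLim.le_horo_add (hlim : HoroLim b p h)
    (hp : ∀ i j l, i ≤ j → j ≤ l → dist (p j) (p l) + dist b (p j) - dist b (p l) ≤ ε i)
    {i j : ℕ} (hij : i ≤ j) (z : M) : h z ≤ horo b (p j) z + ε i := by
  refine le_of_tendsto (hlim z) (eventually_atTop.2 ⟨j, fun l hjl => ?_⟩)
  have := hp i j l hij hjl
  have := dist_triangle z (p j) (p l)
  simp only [horo]
  linarith

variable {hM : IsGeodesicSpace M} (hd : Tendsto (fun i => dist b (p i)) atTop atTop)
  (hp : ∀ i j l, i ≤ j → j ≤ l → dist (p j) (p l) + dist b (p j) - dist b (p l) ≤ ε i)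
  (hε : Tendsto ε atTop (𝓝 0))
include hd hp hε

theorem isAlmostGeodesicRay_interpolate : IsAlmostGeodesicRay (interpolate b p hM) := by
  intro δ hδ
  filter_upwards [eventually_ge_atTop (dist b (p 0)),
    (hε.comp (tendsto_stage hd)).eventually (gt_mem_nhds (half_pos hδ))] with s hs hεs t hst
  have := dist_interpolate_interpolate (hM := hM) hd hp hs hst
  simp only [Function.comp_apply] at hεs
  linarith

theorem isBusemannFunction_interpolate (hlim : HoroLim b p h) :
    IsBusemannFunction (interpolate b p hM) h := by
  intro z
  have hσ := tendsto_stage hd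
  refine tendsto_of_tendsto_of_tendsto_of_le_of_le' (g := fun t => h z - 2 * ε (stage b p t))
    (h := fun t => horo b (p (stage b p t)) z) ?_ ((hlim z).comp hσ) ?_ ?_
  · simpa using tendsto_const_nhds.sub ((hε.comp hσ).const_mul 2)
  · filter_upwards [eventually_ge_atTop (dist b (p 0))] with t ht
    have hnext := hlim.le_horo_add hp (Nat.le_succ (stage b p t)) z
    have := dist_interpolate_right (hM := hM) hd hp ht
    have := dist_triangle z (interpolate b p hM t) (p (stage b p t + 1))
    simp only [horo] at hnext ⊢
    linarith
  · filter_upwards [eventually_ge_atTop (dist b (p 0))] with t ht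
    have := dist_interpolate_left (hM := hM) hd ht
    have := dist_triangle z (p (stage b p t)) (interpolate b p hM t)
    simp only [horo]
    linarith

end RaysFromSequences

theorem IsAlmostGeodesicSeq.exists_ray {M : Type*} [MetricSpace M] (hM : IsGeodesicSpace M)
    {y : ℕ → M} {h : M → ℝ} (hy : IsAlmostGeodesicSeq y) (hlim : HoroLim (y 0) y h) :
    ∃ W : ℝ → M, IsAlmostGeodesicRay W ∧ IsBusemannFunction W h := by
  obtain ⟨k, hk, hkε⟩ := extraction_forall_of_eventually' (P := fun i n => ∀ m l, n ≤ m → m ≤ l →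
      dist (y l) (y m) + dist (y m) (y 0) - dist (y l) (y 0) < 1 / ((i : ℝ) + 1)) fun i => by
    obtain ⟨N, hN⟩ := hy.2 _ Nat.one_div_pos_of_nat
    exact ⟨N, fun n hn m l hnm hml => hN l m (hn.trans hnm) hml⟩
  have hp : ∀ i j l, i ≤ j → j ≤ l →
      dist (y (k j)) (y (k l)) + dist (y 0) (y (k j)) - dist (y 0) (y (k l)) ≤
        1 / ((i : ℝ) + 1) := by
    intro i j l hij hjl
    have := hkε i (k j) (k l) (hk.monotone hij) (hk.monotone hjl)
    rw [dist_comm (y (k j)), dist_comm (y 0) (y (k j)), dist_comm (y 0)]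
    exact this.le
  have hd : Tendsto (fun i => dist (y 0) (y (k i))) atTop atTop := by
    simpa only [Function.comp_def, dist_comm] using hy.1.comp hk.tendsto_atTop
  have hlimk : HoroLim (y 0) (y ∘ k) h := fun z => (hlim z).comp hk.tendsto_atTop
  exact ⟨interpolate (y 0) (y ∘ k) hM,
    isAlmostGeodesicRay_interpolate hd hp tendsto_one_div_add_atTop_nhds_zero_nat,
    isBusemannFunction_interpolate hd hp tendsto_one_div_add_atTop_nhds_zero_nat hlimk⟩

lemma Finset.sup'_sub_eq_zero {ι : Type*} {J : Finset ι} (hJ : J.Nonempty) {f γ : ι → ℝ}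
    (hf : ∀ j ∈ J, f j = 0) (hγ : ∀ j ∈ J, 0 ≤ γ j) (hγ0 : ∃ j ∈ J, γ j = 0) :
    (J.sup' hJ fun j => f j - γ j) = 0 := by
  obtain ⟨j₀, hj₀, hγj₀⟩ := hγ0
  refine le_antisymm (Finset.sup'_le _ _ fun j hj => ?_) (Finset.le_sup'_of_le _ hj₀ ?_)
  · linarith [hf j hj, hγ j hj]
  · rw [hf j₀ hj₀, hγj₀, sub_zero]

lemma tendsto_sub_const_atTop (c : ℝ) : Tendsto (fun t : ℝ => t - c) atTop atTop :=
  tendsto_atTop_add_const_right atTop (-c) tendsto_id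

section Product

variable {ι : Type*} [Fintype ι] [DecidableEq ι] {M : ι → Type*} [∀ j, MetricSpace (M j)]

def piRay (J : Finset ι) (b : ∀ j, M j) (W : ∀ j, ℝ → M j) (γ : ι → ℝ) (t : ℝ) : ∀ j, M j :=
  fun j => if j ∈ J then W j (t - γ j) else b j

variable {J : Finset ι} (hJ : J.Nonempty) {b : ∀ j, M j} {W : ∀ j, ℝ → M j} {h : ∀ j, M j → ℝ}
  {γ : ι → ℝ}

lemma isAlmostGeodesicRay_piRay (hW : ∀ j ∈ J, IsAlmostGeodesicRay (W j)) :
    IsAlmostGeodesicRay (piRay J b W γ) := by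
  intro ε hε
  have hJε : ∀ j ∈ J, ∀ᶠ s in atTop, ∀ t, s ≤ t →
      dist (W j (s - γ j)) (W j (t - γ j)) ≤ t - s + ε := fun j hj =>
    ((tendsto_sub_const_atTop (γ j)).eventually (hW j hj ε hε)).mono fun s hs t hst => by
      simpa using hs (t - γ j) (by linarith)
  filter_upwards [J.eventually_all.2 hJε] with s hs t hst
  refine (dist_pi_le_iff (by linarith)).2 fun j => ?_
  by_cases hj : j ∈ J
  · simpa only [piRay, hj, if_true] using hs j hj t hst
  · simp only [piRay, hj, if_false, dist_self]
    linarith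

include hJ in
lemma isBusemannFunction_piRay (hWh : ∀ j ∈ J, IsBusemannFunction (W j) (h j)) :
    IsBusemannFunction (piRay J b W γ) (fun x => J.sup' hJ fun j => h j (x j) - γ j) := by
  intro x
  have hsup : Tendsto (fun t => J.sup' hJ fun j => dist (x j) (W j (t - γ j)) - t) atTop
      (𝓝 (J.sup' hJ fun j => h j (x j) - γ j)) := by
    refine Tendsto.finset_sup'_nhds_apply hJ fun j hj => ?_
    refine (((hWh j hj (x j)).comp (tendsto_sub_const_atTop (γ j))).sub_const (γ j)).congr
      fun t => ?_
    simp only [Function.comp_apply]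
    ring
  refine tendsto_of_tendsto_of_tendsto_of_le_of_le' hsup hsup
    (Eventually.of_forall fun t => Finset.sup'_le _ _ fun j hj => ?_) ?_
  · have := dist_le_pi_dist x (piRay J b W γ t) j
    simp only [piRay, hj, if_true] at this
    linarith
  · filter_upwards [(hsup.add_atTop tendsto_id).eventually_ge_atTop (dist x b)] with t ht
    rw [id, tsub_le_iff_right] at *
    refine (dist_pi_le_iff (dist_nonneg.trans ht)).2 fun j => ?_
    by_cases hj : j ∈ J
    · simp only [piRay, hj, if_true]
      linarith [Finset.le_sup' (fun j => dist (x j) (W j (t - γ j)) - t) hj]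
    · simp only [piRay, hj, if_false]
      exact (dist_le_pi_dist x b j).trans ht

omit [Fintype ι] in
lemma tendsto_sup'_piRay_add (hW : ∀ j ∈ J, IsAlmostGeodesicRay (W j))
    (hWh : ∀ j ∈ J, IsBusemannFunction (W j) (h j)) (γ' : ι → ℝ) :
    Tendsto (fun t => (J.sup' hJ fun j => h j (piRay J b W γ t j) - γ' j) + t) atTop
      (𝓝 (J.sup' hJ fun j => γ j - γ' j)) := by
  simp only [Finset.sup'_add]
  refine Tendsto.finset_sup'_nhds_apply hJ fun j hj => ?_
  have := (((hWh j hj).tendsto_apply_add (hW j hj)).comp (tendsto_sub_const_atTop (γ j))).add_const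
    (γ j - γ' j)
  rw [zero_add] at this
  refine this.congr fun t => ?_
  simp only [Function.comp_apply, piRay, hj, if_true]
  ring

variable (hW : ∀ j ∈ J, IsAlmostGeodesicRay (W j)) (hWh : ∀ j ∈ J, IsBusemannFunction (W j) (h j))
  (hb : ∀ j ∈ J, h j (b j) = 0) (hγ : ∀ j ∈ J, 0 ≤ γ j) (hγ0 : ∃ j ∈ J, γ j = 0)
include hW hWh hb hγ hγ0

theorem isBusemannPoint_sup' :
    IsBusemannPoint b (fun x => J.sup' hJ fun j => h j (x j) - γ j) :=
  (isAlmostGeodesicRay_piRay (b := b) hW).isBusemannPoint (isBusemannFunction_piRay hJ hWh)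
    (Finset.sup'_sub_eq_zero hJ hb hγ hγ0)

theorem detourCost_sup' (γ' : ι → ℝ) :
    detourCost b (fun x => J.sup' hJ fun j => h j (x j) - γ j)
      (fun x => J.sup' hJ fun j => h j (x j) - γ' j) =
        ((J.sup' hJ fun j => γ j - γ' j : ℝ) : EReal) :=
  (isAlmostGeodesicRay_piRay (b := b) hW).detourCost_eq (isBusemannFunction_piRay hJ hWh)
    (Finset.sup'_sub_eq_zero hJ hb hγ hγ0)
    ((isBusemannFunction_piRay (b := b) (W := W) (γ := γ') hJ hWh).le_add_dist)
    (tendsto_sup'_piRay_add hJ hW hWh γ')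

end Product

theorem stmt_11_general (p : ℕ) (M : Fin p → Type*) [∀ j, MetricSpace (M j)]
    (hgeo : ∀ j, IsGeodesicSpace (M j))
    (y : ∀ j, ℕ → M j) (hy : ∀ j, IsAlmostGeodesicSeq (y j))
    (hs : ∀ j, M j → ℝ) (hconv : ∀ j, HoroLim (y j 0) (y j) (hs j))
    (J : Finset (Fin p)) (hJ : J.Nonempty)
    (α : Fin p → ℝ) (hα : ∀ j ∈ J, 0 ≤ α j) (hα0 : ∃ j ∈ J, α j = 0) :
    ∃ ψ : (Fin p → ℝ) → ((∀ j, M j) → ℝ),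
      (∀ β : Fin p → ℝ, (∀ j ∈ J, 0 ≤ β j) → (∃ j ∈ J, β j = 0) →
        IsBusemannPoint (fun j => y j 0) (ψ β) ∧
        detourDist (fun j => y j 0)
          (fun x => J.sup' hJ fun j => hs j (x j) - α j) (ψ β) < ⊤) ∧
      (∀ β β' : Fin p → ℝ, (∀ j ∈ J, 0 ≤ β j) → (∃ j ∈ J, β j = 0) →
        (∀ j ∈ J, 0 ≤ β' j) → (∃ j ∈ J, β' j = 0) →
        detourDist (fun j => y j 0) (ψ β) (ψ β') =
          (((J.sup' hJ fun j => β j - β' j) + (J.sup' hJ fun j => β' j - β j) : ℝ) : EReal)) := by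
  choose W hW hWh using fun j => (hy j).exists_ray (hgeo j) (hconv j)
  have hb : ∀ j ∈ J, hs j (y j 0) = 0 := fun j _ => (hconv j).apply_base_eq_zero
  have hcost := fun γ hγ hγ0 => detourCost_sup' hJ (fun j _ => hW j) (fun j _ => hWh j) hb
    (γ := γ) hγ hγ0
  refine ⟨fun β x => J.sup' hJ fun j => hs j (x j) - β j, fun β hβ hβ0 =>
    ⟨isBusemannPoint_sup' hJ (fun j _ => hW j) (fun j _ => hWh j) hb hβ hβ0, ?_⟩,
    fun β β' hβ hβ0 hβ' hβ'0 => ?_⟩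
  · rw [detourDist, hcost α hα hα0, hcost β hβ hβ0, ← EReal.coe_add]
    exact EReal.coe_lt_top _
  · rw [detourDist, hcost β hβ hβ0, hcost β' hβ' hβ'0, ← EReal.coe_add]

/-- the part of a product Busemann point contains an isometric copy of
(ℝ^J/Sp(1), ‖·‖_var), modelled by S = {β ∈ ℝ^J : min_{j∈J} β_j = 0}. -/
theorem stmt_11 (p : ℕ) (M : Fin p → Type*) [∀ j, MetricSpace (M j)] [∀ j, ProperSpace (M j)]
    (hgeo : ∀ j, IsGeodesicSpace (M j))
    (y : ∀ j, ℕ → M j) (hy : ∀ j, IsAlmostGeodesicSeq (y j))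
    (hs : ∀ j, M j → ℝ) (hconv : ∀ j, HoroLim (y j 0) (y j) (hs j))
    (J : Finset (Fin p)) (hJ : J.Nonempty)
    (α : Fin p → ℝ) (hα : ∀ j ∈ J, 0 ≤ α j) (hα0 : ∃ j ∈ J, α j = 0) :
    ∃ ψ : (Fin p → ℝ) → ((∀ j, M j) → ℝ),
      (∀ β : Fin p → ℝ, (∀ j ∈ J, 0 ≤ β j) → (∃ j ∈ J, β j = 0) →
        IsBusemannPoint (fun j => y j 0) (ψ β) ∧
        detourDist (fun j => y j 0)
          (fun x => J.sup' hJ fun j => hs j (x j) - α j) (ψ β) < ⊤) ∧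
      (∀ β β' : Fin p → ℝ, (∀ j ∈ J, 0 ≤ β j) → (∃ j ∈ J, β j = 0) →
        (∀ j ∈ J, 0 ≤ β' j) → (∃ j ∈ J, β' j = 0) →
        detourDist (fun j => y j 0) (ψ β) (ψ β') =
          (((J.sup' hJ fun j => β j - β' j) + (J.sup' hJ fun j => β' j - β j) : ℝ) : EReal)) :=
  stmt_11_general p M hgeo y hy hs hconv J hJ α hα hα0
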